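/- Let c₀ ∈ (1,∞) be the unique zero of ψ(t) = (t+1)ln(t+1) + (t−1)ln(t−1) − 2t in (1,∞). Let M > 0, let r : ℝ → (0,∞) satisfy r(x) ≤ c₀|x| + M for all |x| > M, and define φ : ℝ → ℝ by φ(x) := max{ln(|x| − M), 0} for |x| > M and φ(x) := 0 for |x| ≤ M. Then there exists M̃ > 0 such that for every x ∈ ℝ with |x| > M̃, (1/(2r(x)))∫_{x−r(x)}^{x+r(x)} φ(s) ds ≤ φ(x). -/

import Mathlib

open Filter MeasureTheory

noncomputable def psi (t : ℝ) : ℝ :=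
  (t + 1) * Real.log (t + 1) + (t - 1) * Real.log (t - 1) - 2 * t

/-!
Put `y = |x|`, `ρ = r x`, `b = y - M`; the integrand is even, so the window may be centred
at `y`, and the claim is `∫_{y-ρ}^{y+ρ} log⁺ (|s| - M) ≤ 2 ρ log b`. For `ρ ≤ b - 1` the
integrand is `log (s - M)` on the whole window and concavity of `log` gives the bound. For
larger `ρ`, the primitive `P a = klFun (max 1 a)` of `log⁺` (equal to `a log a - a + 1` for
`a ≥ 1`) is convex and bounds the integral by `P (b + ρ) + P (ρ - y - M) + 2 P M`, where `2 P M`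
also absorbs the values `log (M - |s|) > 0` that Lean's `log` produces for `|s| < M - 1`. This
bound is convex in `ρ`, so it suffices to compare it with `2 ρ log b` at the ends `ρ = b - 1`
and `ρ = c₀ y + M`. At the right end `ψ c₀ = 0` makes the terms of order `y log y` cancel
exactly, leaving the margin `2 M log b`, which beats the remaining constants once `y` is large.
-/

open Real InformationTheory Set

lemma monotoneOn_klFun : MonotoneOn klFun (Ici 1) := by
  refine monotoneOn_of_deriv_nonneg (convex_Ici 1) continuous_klFun.continuousOn
    (fun x hx => ?_) fun x hx => ?_ <;> rw [interior_Ici] at hx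
  · exact (hasDerivAt_klFun (zero_lt_one.trans hx).ne').differentiableAt.differentiableWithinAt
  · rw [deriv_klFun]
    exact log_nonneg hx.le

noncomputable def posLogPrimitive (a : ℝ) : ℝ := klFun (max 1 a)

lemma posLogPrimitive_of_le_one {a : ℝ} (ha : a ≤ 1) : posLogPrimitive a = 0 := by
  rw [posLogPrimitive, max_eq_left ha, klFun_one]

lemma posLogPrimitive_of_one_le {a : ℝ} (ha : 1 ≤ a) : posLogPrimitive a = klFun a := by
  rw [posLogPrimitive, max_eq_right ha]

lemma posLogPrimitive_nonneg (a : ℝ) : 0 ≤ posLogPrimitive a :=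
  klFun_nonneg (zero_le_one.trans (le_max_left 1 a))

lemma convexOn_posLogPrimitive : ConvexOn ℝ univ posLogPrimitive := by
  have himage : (max 1 ·) '' univ = Ici (1 : ℝ) := by
    ext t
    simp only [mem_image, mem_univ, true_and, mem_Ici]
    exact ⟨fun ⟨a, ha⟩ => ha ▸ le_max_left 1 a, fun ht => ⟨t, max_eq_right ht⟩⟩
  refine ConvexOn.comp (g := klFun) ?_
    ((convexOn_const 1 convex_univ).sup (convexOn_id convex_univ)) ?_
  · rw [himage]; exact convexOn_klFun.subset (Ici_subset_Ici.2 zero_le_one) (convex_Ici 1)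
  · rw [himage]; exact monotoneOn_klFun

lemma integral_posLog_eq {a : ℝ} (ha : 0 ≤ a) :
    ∫ u in (0 : ℝ)..a, log⁺ u = posLogPrimitive a := by
  have hzero : ∀ {c : ℝ}, 0 ≤ c → c ≤ 1 → ∫ u in (0 : ℝ)..c, log⁺ u = 0 := fun h0 h1 => by
    rw [intervalIntegral.integral_congr (g := fun _ => 0), intervalIntegral.integral_zero]
    intro u hu
    rw [uIcc_of_le h0] at hu
    exact (posLog_eq_zero_iff u).2 (abs_le.2 ⟨by linarith [hu.1], hu.2.trans h1⟩)
  rcases le_total a 1 with h1 | h1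
  · rw [hzero ha h1, posLogPrimitive_of_le_one h1]
  · rw [← intervalIntegral.integral_add_adjacent_intervals
      (continuous_posLog.intervalIntegrable 0 1) (continuous_posLog.intervalIntegrable 1 a),
      hzero zero_le_one le_rfl, intervalIntegral.integral_congr (g := log), integral_log,
      posLogPrimitive_of_one_le h1, klFun_apply]
    · simp only [log_one, mul_zero]; ring
    · intro u hu
      rw [uIcc_of_le h1] at hu
      exact posLog_eq_log (hu.1.trans (le_abs_self u))

lemma integral_posLog_le (a : ℝ) : ∫ u in (0 : ℝ)..a, log⁺ u ≤ posLogPrimitive a := by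
  rcases le_total 0 a with ha | ha
  · exact (integral_posLog_eq ha).le
  · rw [intervalIntegral.integral_symm, posLogPrimitive_of_le_one (ha.trans zero_le_one),
      neg_nonpos]
    exact intervalIntegral.integral_nonneg ha fun u _ => posLog_nonneg

lemma integral_posLog_abs_sub_le (M a c : ℝ) :
    ∫ s in a..c, log⁺ (|s| - M) ≤
      posLogPrimitive (c - M) + posLogPrimitive (-a - M) + 2 * posLogPrimitive M := by
  have hint : ∀ a c : ℝ, IntervalIntegrable (fun s => log⁺ (|s| - M)) volume a c :=
    fun a c => (by fun_prop : Continuous fun s => log⁺ (|s| - M)).intervalIntegrable a c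
  have hfrom_zero : ∀ c, ∫ s in (0 : ℝ)..c, log⁺ (|s| - M) ≤
      posLogPrimitive (c - M) + posLogPrimitive M := by
    intro c
    rcases le_total 0 c with hc | hc
    · have hshift : ∫ s in (0 : ℝ)..c, log⁺ (|s| - M) = ∫ u in -M..(c - M), log⁺ u := by
        rw [← zero_sub, ← intervalIntegral.integral_comp_sub_right]
        refine intervalIntegral.integral_congr fun s hs => ?_
        rw [uIcc_of_le hc] at hs
        simp only [abs_of_nonneg hs.1]
      have hneg : ∫ u in -M..0, log⁺ u = ∫ u in (0 : ℝ)..M, log⁺ u := by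
        simpa using (intervalIntegral.integral_comp_neg (a := 0) (b := M) (log⁺ ·)).symm
      rw [hshift, ← intervalIntegral.integral_add_adjacent_intervals (b := 0)
        (continuous_posLog.intervalIntegrable _ _) (continuous_posLog.intervalIntegrable _ _),
        hneg]
      linarith [integral_posLog_le M, integral_posLog_le (c - M)]
    · rw [intervalIntegral.integral_symm]
      have : 0 ≤ ∫ s in c..0, log⁺ (|s| - M) :=
        intervalIntegral.integral_nonneg hc fun s _ => posLog_nonneg
      linarith [posLogPrimitive_nonneg (c - M), posLogPrimitive_nonneg M]
  have heven : ∫ s in (0 : ℝ)..a, log⁺ (|s| - M) = -∫ s in (0 : ℝ)..(-a), log⁺ (|s| - M) := by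
    rw [intervalIntegral.integral_symm]
    simpa using
      (intervalIntegral.integral_comp_neg (a := 0) (b := -a) (fun s => log⁺ (|s| - M))).symm
  rw [← intervalIntegral.integral_interval_sub_left (hint 0 c) (hint 0 a), heven]
  linarith [hfrom_zero c, hfrom_zero (-a)]

lemma log_le_log_add_sub_div {u b : ℝ} (hu : 0 < u) (hb : 0 < b) :
    log u ≤ log b + (u - b) / b := by
  have := log_le_sub_one_of_pos (div_pos hu hb)
  rw [log_div hu.ne' hb.ne'] at this
  rw [sub_div, div_self hb.ne']
  linarith

lemma integral_log_le_two_mul_log {b ρ : ℝ} (hρ : 0 ≤ ρ) (hρb : ρ < b) :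
    ∫ u in (b - ρ)..(b + ρ), log u ≤ 2 * ρ * log b := by
  have hb : 0 < b := hρ.trans_lt hρb
  calc ∫ u in (b - ρ)..(b + ρ), log u ≤ ∫ u in (b - ρ)..(b + ρ), (log b + (u - b) / b) :=
        intervalIntegral.integral_mono_on (by linarith) intervalIntegral.intervalIntegrable_log'
          ((by fun_prop : Continuous fun u => log b + (u - b) / b).intervalIntegrable _ _)
          fun u hu => log_le_log_add_sub_div (by linarith [hu.1]) hb
    _ = 2 * ρ * log b := by
        rw [intervalIntegral.integral_add (by simp) (by simp), intervalIntegral.integral_div,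
          intervalIntegral.integral_comp_sub_right (fun u => u)]
        simp only [intervalIntegral.integral_const, integral_id, smul_eq_mul]
        ring

lemma integral_posLog_abs_sub_le_two_mul_log {M y ρ : ℝ} (hM : 0 ≤ M) (hρ : 0 ≤ ρ)
    (hρy : ρ ≤ y - M - 1) :
    ∫ s in (y - ρ)..(y + ρ), log⁺ (|s| - M) ≤ 2 * ρ * log (y - M) := by
  have hlog :
      ∫ s in (y - ρ)..(y + ρ), log⁺ (|s| - M) = ∫ s in (y - ρ)..(y + ρ), log (s - M) := by
    refine intervalIntegral.integral_congr fun s hs => ?_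
    rw [uIcc_of_le (by linarith)] at hs
    have hs1 : 1 ≤ s - M := by linarith [hs.1]
    rw [abs_of_nonneg (by linarith), posLog_eq_log (hs1.trans (le_abs_self _))]
  rw [hlog, intervalIntegral.integral_comp_sub_right (log ·), sub_right_comm, add_sub_right_comm]
  exact integral_log_le_two_mul_log hρ (by linarith)

lemma klFun_add_klFun_eq_psi {c y : ℝ} (hc : 1 < c) (hy : 0 < y) :
    klFun ((c + 1) * y) + klFun ((c - 1) * y) = y * psi c + 2 * c * (y * log y) + 2 := by
  simp only [klFun_apply, psi]
  rw [log_mul (by linarith) hy.ne', log_mul (by linarith) hy.ne']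
  ring

lemma ConvexOn.le_line_of_mem_Icc {s : Set ℝ} {f : ℝ → ℝ} (hf : ConvexOn ℝ s f)
    {m q a b x : ℝ} (ha : a ∈ s) (hb : b ∈ s) (hfa : f a ≤ m * a + q) (hfb : f b ≤ m * b + q)
    (hx : x ∈ Icc a b) : f x ≤ m * x + q := by
  have hg := hf.add ((LinearMap.mulLeft ℝ (-m)).convexOn hf.1)
  have := hg.le_on_segment ha hb (by rwa [segment_eq_Icc (hx.1.trans hx.2)])
  simp only [Pi.add_apply, LinearMap.mulLeft_apply] at this
  have hmax : max (f a + -m * a) (f b + -m * b) ≤ q := max_le (by linarith) (by linarith)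
  linarith

lemma integral_comp_abs_eq_center_abs (f : ℝ → ℝ) (x ρ : ℝ) :
    ∫ s in (x - ρ)..(x + ρ), f |s| = ∫ s in (|x| - ρ)..(|x| + ρ), f |s| := by
  rcases abs_choice x with h | h <;> rw [h]
  simpa [neg_add_eq_sub, abs_neg] using
    intervalIntegral.integral_comp_neg (a := x - ρ) (b := x + ρ) (fun s => f |s|)

lemma eventually_posLogPrimitive_two_mul_sub_one_le (K : ℝ) :
    ∀ᶠ b in atTop, posLogPrimitive (2 * b - 1) + K ≤ 2 * (b - 1) * log b := by
  filter_upwards [eventually_ge_atTop 1, eventually_ge_atTop (2 * K + 3),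
    isLittleO_log_id_atTop.bound (show (0 : ℝ) < 1 / 10 by norm_num)] with b hb1 hbK hlog
  rw [Real.norm_eq_abs, Real.norm_eq_abs, id, abs_of_pos (show (0 : ℝ) < b by linarith)] at hlog
  rw [posLogPrimitive_of_one_le (by linarith), klFun_apply]
  have hlog2b : log (2 * b - 1) ≤ log 2 + log b := by
    rw [← log_mul two_ne_zero (by linarith)]
    exact log_le_log (by linarith) (by linarith)
  have h1 := mul_le_mul_of_nonneg_left hlog2b (by linarith : (0 : ℝ) ≤ 2 * b - 1)
  have h2 := mul_le_mul_of_nonneg_left log_two_lt_d9.le (by linarith : (0 : ℝ) ≤ 2 * b - 1)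
  nlinarith [le_abs_self (log b)]

lemma eventually_posLogPrimitive_add_posLogPrimitive_le {c₀ M : ℝ} (hc₀1 : 1 < c₀)
    (hc₀ : psi c₀ = 0) (hM : 0 < M) (K : ℝ) :
    ∀ᶠ y in atTop, posLogPrimitive ((c₀ + 1) * y) + posLogPrimitive ((c₀ - 1) * y) + K ≤
      2 * (c₀ * y + M) * log (y - M) := by
  have hlog : Tendsto (fun y => log (y - M)) atTop atTop :=
    tendsto_log_atTop.comp (tendsto_atTop_add_const_right _ (-M) tendsto_id)
  filter_upwards [eventually_ge_atTop (2 * M),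
    (tendsto_id.const_mul_atTop (sub_pos.2 hc₀1)).eventually_ge_atTop 1,
    hlog.eventually_ge_atTop ((4 * c₀ * M + 2 + K) / (2 * M))] with y hyM hy1 hyK
  have hy : 0 < y := by linarith
  simp only [id] at hy1
  rw [posLogPrimitive_of_one_le (by nlinarith), posLogPrimitive_of_one_le hy1,
    klFun_add_klFun_eq_psi hc₀1 hy, hc₀]
  have hyM' : 0 < y - M := by linarith
  have hlogy : log y ≤ log (y - M) + M / (y - M) := by
    simpa only [sub_sub_cancel] using log_le_log_add_sub_div hy hyM'
  have hfrac : y * (M / (y - M)) ≤ 2 * M := by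
    rw [mul_div_assoc', div_le_iff₀ hyM']
    nlinarith
  have hylogy : 2 * c₀ * (y * log y) ≤ 2 * c₀ * (y * log (y - M) + 2 * M) := by
    have := mul_le_mul_of_nonneg_left hlogy hy.le
    exact mul_le_mul_of_nonneg_left (by linarith) (by linarith)
  rw [div_le_iff₀ (by positivity)] at hyK
  nlinarith

lemma eventually_integral_posLog_abs_sub_le {c₀ M : ℝ} (hc₀1 : 1 < c₀) (hc₀ : psi c₀ = 0)
    (hM : 0 < M) :
    ∀ᶠ y in atTop, ∀ ρ, 0 < ρ → ρ ≤ c₀ * y + M →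
      ∫ s in (y - ρ)..(y + ρ), log⁺ (|s| - M) ≤ 2 * ρ * log (y - M) := by
  set K := 2 * posLogPrimitive M
  filter_upwards [(tendsto_atTop_add_const_right _ (-M) tendsto_id).eventually
      (eventually_posLogPrimitive_two_mul_sub_one_le K),
    eventually_posLogPrimitive_add_posLogPrimitive_le hc₀1 hc₀ hM K] with y hleft hright ρ hρ hρmax
  rcases le_or_gt ρ (y - M - 1) with hsmall | hlarge
  · exact integral_posLog_abs_sub_le_two_mul_log hM.le hρ.le hsmall
  refine (integral_posLog_abs_sub_le M _ _).trans ?_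
  have hconv : ConvexOn ℝ univ
      fun ρ => posLogPrimitive ((y - M) + ρ) + posLogPrimitive (-(y + M) + ρ) :=
    (convexOn_posLogPrimitive.translate_right (y - M)).add
      (convexOn_posLogPrimitive.translate_right (-(y + M)))
  have hline := hconv.le_line_of_mem_Icc (m := 2 * log (y - M)) (q := -K) (mem_univ (y - M - 1))
    (mem_univ (c₀ * y + M)) ?_ ?_ ⟨hlarge.le, hρmax⟩
  · rw [show y + ρ - M = (y - M) + ρ by ring, show -(y - ρ) - M = -(y + M) + ρ by ring]
    linarith
  · simp only [id, ← sub_eq_add_neg] at hleft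
    rw [posLogPrimitive_of_le_one (a := -(y + M) + (y - M - 1)) (by linarith),
      show y - M + (y - M - 1) = 2 * (y - M) - 1 by ring]
    linarith
  · rw [show y - M + (c₀ * y + M) = (c₀ + 1) * y by ring,
      show -(y + M) + (c₀ * y + M) = (c₀ - 1) * y by ring]
    linarith

/-- With `c₀` the unique zero of `ψ` in `(1,∞)`: if `M > 0`, `r : ℝ → (0,∞)` satisfies
`r(x) ≤ c₀|x| + M` for `|x| > M`, and `φ := ln⁺(|·| - M)` (i.e.
`φ(x) = max{ln(|x| - M), 0}`, equal to `0` for `|x| ≤ M + 1`), then there exists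
`M̃ > 0` such that `λ_{x,r(x)}(φ) ≤ φ(x)` for every `|x| > M̃`. -/
theorem stmt16 (c₀ M : ℝ) (hc₀1 : 1 < c₀) (hc₀ : psi c₀ = 0) (hM : 0 < M)
    (r : ℝ → ℝ) (hr_pos : ∀ x, 0 < r x)
    (hr : ∀ x : ℝ, M < |x| → r x ≤ c₀ * |x| + M) :
    ∃ Mt > (0:ℝ), ∀ x : ℝ, Mt < |x| →
      (1 / (2 * r x)) * (∫ s in (x - r x)..(x + r x), max (Real.log (|s| - M)) 0)
      ≤ max (Real.log (|x| - M)) 0 := by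
  obtain ⟨Y, hY⟩ := eventually_atTop.1 (eventually_integral_posLog_abs_sub_le hc₀1 hc₀ hM)
  refine ⟨max Y M, lt_max_of_lt_right hM, fun x hx => ?_⟩
  have hxM : M < |x| := (le_max_right Y M).trans_lt hx
  have hρ := hr_pos x
  have hbound := hY |x| ((le_max_left Y M).trans hx.le) (r x) hρ (hr x hxM)
  simp only [max_comm _ (0 : ℝ), ← posLog_apply]
  rw [integral_comp_abs_eq_center_abs (fun t => log⁺ (t - M))]
  calc 1 / (2 * r x) * ∫ s in (|x| - r x)..(|x| + r x), log⁺ (|s| - M)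
      ≤ 1 / (2 * r x) * (2 * r x * log (|x| - M)) := by gcongr
    _ = log (|x| - M) := by field_simp
    _ ≤ log⁺ (|x| - M) := le_max_right _ _
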